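/- arXiv:1605.02787 — 2 statements merged into one kernel-verified Lean document; each statement's English description precedes it below -/
import Mathlib

section
/- Let g₁,…,g_m ∈ ℝ[x₁,…,x_n] be polynomials with m ≤ n, let ζ ∈ ℝⁿ be a common zero of g₁,…,g_m such that the gradients ∇g₁(ζ),…,∇g_m(ζ) are linearly independent, let d be an integer with d ≥ deg g_i for all i, and let ε > 0. Then there exists δ > 0 such that: whenever f₁,…,f_m ∈ ℝ[x₁,…,x_n] have degree at most d and every coefficient of f_i − g_i has absolute value less than δ (for each i), there exists ξ ∈ ℝⁿ such that (a) f₁(ξ) = ⋯ = f_m(ξ) = 0; (b) ∇f₁(ξ),…,∇f_m(ξ) are linearly independent; and (c) ‖ξ − ζ‖ < ε, where ‖·‖ is the Euclidean norm on ℝⁿ. -/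
open MvPolynomial Matrix

/-- The gradient of a multivariate polynomial with rational coefficients,
evaluated at a point with coordinates in a `ℚ`-algebra `K`. -/
noncomputable def grad {K : Type} [CommRing K] [Algebra ℚ K] {m : ℕ}
    (F : MvPolynomial (Fin m) ℚ) (v : Fin m → K) : Fin m → K :=
  fun i => MvPolynomial.aeval v (MvPolynomial.pderiv i F)

/-- `F` is a nonzero cubic form defining a smooth cubic hypersurface. -/
def SmoothCubic {m : ℕ} (F : MvPolynomial (Fin m) ℚ) : Prop :=
  F ≠ 0 ∧ F.IsHomogeneous 3 ∧
    ∀ v : Fin m → ℂ, v ≠ 0 → MvPolynomial.aeval v F = 0 → grad F v ≠ 0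

/-- The set of `K`-points of the hypersurface `X : F = 0`. -/
def XPts (K : Type) [Field K] [Algebra ℚ K] {m : ℕ} (F : MvPolynomial (Fin m) ℚ) :
    Set (Projectivization K (Fin m → K)) :=
  {P | MvPolynomial.aeval P.rep F = 0}

/-- `ℓ · X = P + Q + R` for some line `ℓ` over `K` not contained in `X`:
the restriction of `F` to a linear parametrization of the line spanned by `u, w`
is a nonzero binary cubic whose roots (with multiplicity) correspond to `P, Q, R`. -/
def LineEq {K : Type} [Field K] [Algebra ℚ K] {m : ℕ}
    (F : MvPolynomial (Fin m) ℚ)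
    (P Q R : Projectivization K (Fin m → K)) : Prop :=
  ∃ (u w : Fin m → K) (aP bP aQ bQ aR bR c : K)
    (hP : aP • u + bP • w ≠ 0) (hQ : aQ • u + bQ • w ≠ 0) (hR : aR • u + bR • w ≠ 0),
      LinearIndependent K ![u, w] ∧ c ≠ 0 ∧
      P = Projectivization.mk K (aP • u + bP • w) hP ∧
      Q = Projectivization.mk K (aQ • u + bQ • w) hQ ∧
      R = Projectivization.mk K (aR • u + bR • w) hR ∧
      ∀ s t : K, MvPolynomial.aeval (s • u + t • w) F =
        c * (bP * s - aP * t) * (bQ * s - aQ * t) * (bR * s - aR * t)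

/-- The span of `S ⊆ X(ℚ)` under secant and tangent constructions: the smallest
subset of `X(ℚ)` containing `S` and closed under taking the third point of
intersection of a rational line with `X`. -/
def SpanSet {m : ℕ} (F : MvPolynomial (Fin m) ℚ)
    (S : Set (Projectivization ℚ (Fin m → ℚ))) : Set (Projectivization ℚ (Fin m → ℚ)) :=
  ⋂₀ {T | S ⊆ T ∧ T ⊆ XPts ℚ F ∧
        ∀ P Q R, LineEq F P Q R → P ∈ T → Q ∈ T → R ∈ T}

/-- The quotient topology on real projective space. -/
instance projectivizationTopology (m : ℕ) :
    TopologicalSpace (Projectivization ℝ (Fin m → ℝ)) :=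
  inferInstanceAs (TopologicalSpace (Quotient (projectivizationSetoid ℝ (Fin m → ℝ))))

/-- `U` is an open subset of `X(ℝ)` in the subspace topology. -/
def IsOpenInX {m : ℕ} (F : MvPolynomial (Fin m) ℚ)
    (U : Set (Projectivization ℝ (Fin m → ℝ))) : Prop :=
  ∃ O : Set (Projectivization ℝ (Fin m → ℝ)), IsOpen O ∧ U = O ∩ XPts ℝ F

/-- The real projective point associated to a rational projective point. -/
noncomputable def ratToReal {m : ℕ} (P : Projectivization ℚ (Fin m → ℚ)) :
    Projectivization ℝ (Fin m → ℝ) :=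
  Projectivization.mk ℝ (fun i => (P.rep i : ℝ)) (by
    intro h
    apply Projectivization.rep_nonzero P
    funext i
    have hi : ((P.rep i : ℝ)) = 0 := congrFun h i
    exact_mod_cast hi)

/-- The Hessian matrix of `F` at `v`. -/
noncomputable def hessAt {K : Type} [CommRing K] [Algebra ℚ K] {m : ℕ}
    (F : MvPolynomial (Fin m) ℚ) (v : Fin m → K) : Matrix (Fin m) (Fin m) K :=
  Matrix.of fun i j => MvPolynomial.aeval v (MvPolynomial.pderiv i (MvPolynomial.pderiv j F))

/-- `c` is (a lift of) a smooth real point of `Y_{B,D}`, where `b, d` are lifts of `B, D`: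
`c` is a nonzero common zero of the three forms defining `Y_{B,D}` at which their
gradients are linearly independent. -/
def YSmoothPt {m : ℕ} (F : MvPolynomial (Fin m) ℚ) (b d c : Fin m → ℝ) : Prop :=
  c ≠ 0 ∧ MvPolynomial.aeval c F = 0 ∧ grad F c ⬝ᵥ d = 0 ∧ grad F b ⬝ᵥ c = 0 ∧
    LinearIndependent ℝ ![grad F c, Matrix.vecMul d (hessAt F c), grad F b]

/-- The tangent space `T̂_P = {v : ∇F(lift of P)·v = 0}` at the vector level. -/
def tangentVecs {m : ℕ} (F : MvPolynomial (Fin m) ℚ) (v : Fin m → ℝ) : Set (Fin m → ℝ) :=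
  {w | grad F v ⬝ᵥ w = 0}

/-- The second fundamental form (as a quadratic form on `T̂_P`). -/
noncomputable def sff {m : ℕ} (F : MvPolynomial (Fin m) ℚ) (v w : Fin m → ℝ) : ℝ :=
  w ⬝ᵥ Matrix.mulVec (hessAt F v) w

/-- The second fundamental form at `P` has full rank: the radical of the restriction of
the Hessian form to `T̂_P` is exactly the line `ℝ·v_P`. -/
def SFFFullRank {m : ℕ} (F : MvPolynomial (Fin m) ℚ)
    (P : Projectivization ℝ (Fin m → ℝ)) : Prop :=
  {v | v ∈ tangentVecs F P.rep ∧
      ∀ w ∈ tangentVecs F P.rep, v ⬝ᵥ Matrix.mulVec (hessAt F P.rep) w = 0}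
    = {v | ∃ c : ℝ, v = c • P.rep}

/-- The second fundamental form at `P` is definite. -/
def SFFDefinite {m : ℕ} (F : MvPolynomial (Fin m) ℚ)
    (P : Projectivization ℝ (Fin m → ℝ)) : Prop :=
  ((∀ v ∈ tangentVecs F P.rep, 0 ≤ sff F P.rep v) ∨
   (∀ v ∈ tangentVecs F P.rep, sff F P.rep v ≤ 0)) ∧
  ∀ v ∈ tangentVecs F P.rep, sff F P.rep v = 0 → ∃ c : ℝ, v = c • P.rep

/-- The second fundamental form at `P` is indefinite. -/
def SFFIndefinite {m : ℕ} (F : MvPolynomial (Fin m) ℚ)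
    (P : Projectivization ℝ (Fin m → ℝ)) : Prop :=
  (∃ v ∈ tangentVecs F P.rep, 0 < sff F P.rep v) ∧
  (∃ v ∈ tangentVecs F P.rep, sff F P.rep v < 0)

/-- `p` is (a complex lift of) an Eckardt point of `X`: `X_p` is a cone with vertex `p`,
i.e. for every point `q` of `X_p` not equal to `p`, the line through `p` and `q`
is contained in `X_p`. -/
def IsEckardt {m : ℕ} (F : MvPolynomial (Fin m) ℚ) (p : Fin m → ℂ) : Prop :=
  ∀ q : Fin m → ℂ, q ≠ 0 → MvPolynomial.aeval q F = 0 → grad F p ⬝ᵥ q = 0 →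
    (¬ ∃ c : ℂ, q = c • p) →
    ∀ s t : ℂ, MvPolynomial.aeval (s • p + t • q) F = 0 ∧
      grad F p ⬝ᵥ (s • p + t • q) = 0

/-!
Encode a system of `m` polynomials of degree at most `d` by its coefficients on the finitely many
monomials of degree at most `d`; in the sup norm, "every coefficient within `δ`" is a `δ`-ball.
The evaluation map `Φ(c, x)` is polynomial, hence smooth, and at `(coefficients of g, ζ)` its
partial derivative in `x` is the Jacobian of `g` at `ζ`, which is surjective since its rows are
independent. The surjective mapping theorem applied to `(c, x) ↦ (c, Φ(c, x))` then solves
`Φ(c, x) = 0` for every `c` near the coefficients of `g` with `x` in any prescribed neighbourhood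
of `ζ`; taking that neighbourhood inside the open set where the Jacobian rows stay independent
gives the theorem.
-/

open Filter Topology

theorem HasStrictFDerivAt.eventually_exists_mem_apply_eq {𝕜 : Type*} [NontriviallyNormedField 𝕜]
    {E₁ E₂ F : Type*} [NormedAddCommGroup E₁] [NormedSpace 𝕜 E₁] [CompleteSpace E₁]
    [NormedAddCommGroup E₂] [NormedSpace 𝕜 E₂] [CompleteSpace E₂]
    [NormedAddCommGroup F] [NormedSpace 𝕜 F] [CompleteSpace F]
    {Φ : E₁ × E₂ → F} {Φ' : E₁ × E₂ →L[𝕜] F} {p : E₁ × E₂} (hΦ : HasStrictFDerivAt Φ Φ' p)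
    (hsurj : Function.Surjective (Φ' ∘L .inr 𝕜 E₁ E₂)) {U : Set (E₁ × E₂)} (hU : U ∈ 𝓝 p) :
    ∀ᶠ c in 𝓝 p.1, ∃ x, (c, x) ∈ U ∧ Φ (c, x) = Φ p := by
  have hG : HasStrictFDerivAt (fun q => (q.1, Φ q))
      ((ContinuousLinearMap.fst 𝕜 E₁ E₂).prod Φ') p :=
    hasStrictFDerivAt_fst.prodMk hΦ
  have hG' : ((ContinuousLinearMap.fst 𝕜 E₁ E₂).prod Φ').range = ⊤ := by
    refine LinearMap.range_eq_top.2 fun ⟨a, b⟩ => ?_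
    obtain ⟨x, hx⟩ := hsurj (b - Φ' (a, 0))
    have hsplit : Φ' (a, x) = Φ' (a, 0) + Φ' (0, x) := by
      rw [← map_add, Prod.mk_add_mk, add_zero, zero_add]
    exact ⟨(a, x), by simp_all⟩
  have himage : (fun q => (q.1, Φ q)) '' U ∈ 𝓝 (p.1, Φ p) := by
    rw [← hG.map_nhds_eq_of_surj hG']
    exact image_mem_map hU
  have hpair : Tendsto (fun c => (c, Φ p)) (𝓝 p.1) (𝓝 (p.1, Φ p)) :=
    (continuous_id.prodMk continuous_const).tendsto p.1
  filter_upwards [hpair himage] with c ⟨q, hqU, hq⟩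
  obtain ⟨rfl, hΦq⟩ := Prod.mk.inj hq
  exact ⟨q.2, hqU, hΦq⟩

theorem Matrix.mulVec_surjective_of_linearIndependent_row {K m n : Type*} [Field K] [Fintype m]
    [Fintype n] {M : Matrix m n K} (h : LinearIndependent K M.row) : Function.Surjective M.mulVec :=
  LinearMap.range_eq_top.1 <| Submodule.eq_top_of_finrank_eq <| by
    change M.rank = _
    rw [h.rank_matrix, Module.finrank_fintype_fun_eq_card]

namespace MvPolynomial

variable {σ ι : Type*}

noncomputable def jacobian (f : ι → MvPolynomial σ ℝ) (x : σ → ℝ) : Matrix ι σ ℝ :=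
  Matrix.of fun i j => eval x (pderiv j (f i))

noncomputable def ofCoeffs (S : Finset (σ →₀ ℕ)) (c : S → ℝ) : MvPolynomial σ ℝ :=
  ∑ s : S, c s • monomial (s : σ →₀ ℕ) 1

theorem ofCoeffs_coeff {S : Finset (σ →₀ ℕ)} {p : MvPolynomial σ ℝ} (hp : p.support ⊆ S) :
    ofCoeffs S (fun s => coeff s p) = p := by
  rw [ofCoeffs, Finset.sum_coe_sort S (fun s => coeff s p • monomial s 1)]
  conv_rhs => rw [p.as_sum]
  simp only [smul_monomial, smul_eq_mul, mul_one]
  exact (Finset.sum_subset hp fun s _ hs => by simp_all).symm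

theorem continuous_jacobian_ofCoeffs (S : Finset (σ →₀ ℕ)) :
    Continuous fun q : (ι → S → ℝ) × (σ → ℝ) => jacobian (fun i => ofCoeffs S (q.1 i)) q.2 := by
  simp only [jacobian, ofCoeffs, map_sum, Derivation.map_smul, smul_eval]
  refine continuous_pi fun i => continuous_pi fun j => ?_
  have := fun p : MvPolynomial σ ℝ => p.continuous_eval
  fun_prop

variable [Fintype σ]

theorem hasFDerivAt_eval (p : MvPolynomial σ ℝ) (x : σ → ℝ) :
    HasFDerivAt (fun y => eval y p)
      (∑ j, eval x (pderiv j p) • ContinuousLinearMap.proj (R := ℝ) (φ := fun _ : σ => ℝ) j) x := by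
  classical
  induction p using MvPolynomial.induction_on with
  | C a => simpa using hasFDerivAt_const a x
  | add p q hp hq => simpa only [map_add, add_smul, Finset.sum_add_distrib] using hp.fun_add hq
  | mul_X p i hp =>
    simp only [eval_mul, eval_X]
    refine (hp.fun_mul (hasFDerivAt_apply i x)).congr_fderiv ?_
    ext v
    simp [pderiv_X, Pi.single_apply, apply_ite (eval x), ite_mul, add_mul, Finset.sum_add_distrib,
      Finset.mul_sum, mul_assoc]

theorem hasFDerivAt_eval_jacobian (f : ι → MvPolynomial σ ℝ) (x : σ → ℝ) :
    HasFDerivAt (fun y i => eval y (f i)) (jacobian f x).mulVecLin.toContinuousLinearMap x := by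
  refine hasFDerivAt_pi'.2 fun i => (hasFDerivAt_eval (f i) x).congr_fderiv ?_
  ext v
  simp [jacobian, mulVec, dotProduct]

variable [Fintype ι]

theorem contDiff_eval_ofCoeffs (S : Finset (σ →₀ ℕ)) :
    ContDiff ℝ 1 fun q : (ι → S → ℝ) × (σ → ℝ) => fun i => eval q.2 (ofCoeffs S (q.1 i)) := by
  have hmon (s : σ →₀ ℕ) : ContDiff ℝ 1 fun x : σ → ℝ => eval x (monomial s 1) :=
    (AnalyticOnNhd.eval_mvPolynomial _).contDiff
  simp only [ofCoeffs, map_sum, smul_eval]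
  fun_prop

theorem eventually_exists_zero_linearIndependent_jacobian_ofCoeffs {S : Finset (σ →₀ ℕ)}
    {g : ι → MvPolynomial σ ℝ} (hgS : ∀ i, (g i).support ⊆ S) {ζ : σ → ℝ}
    (hζ : ∀ i, eval ζ (g i) = 0) (hind : LinearIndependent ℝ (jacobian g ζ).row)
    {V : Set (σ → ℝ)} (hV : V ∈ 𝓝 ζ) :
    ∀ᶠ c in 𝓝 (fun i (s : S) => coeff s (g i)), ∃ x ∈ V, (∀ i, eval x (ofCoeffs S (c i)) = 0) ∧
      LinearIndependent ℝ (jacobian (fun i => ofCoeffs S (c i)) x).row := by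
  set c₀ : ι → S → ℝ := fun i s => coeff s (g i)
  have hg (i : ι) : ofCoeffs S (c₀ i) = g i := ofCoeffs_coeff (hgS i)
  set Φ := fun q : (ι → S → ℝ) × (σ → ℝ) => fun i => eval q.2 (ofCoeffs S (q.1 i))
  have hΦ : HasStrictFDerivAt Φ (fderiv ℝ Φ (c₀, ζ)) (c₀, ζ) :=
    (contDiff_eval_ofCoeffs S).contDiffAt.hasStrictFDerivAt one_ne_zero
  have hpartial :
      fderiv ℝ Φ (c₀, ζ) ∘L .inr ℝ _ _ = (jacobian g ζ).mulVecLin.toContinuousLinearMap := by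
    refine (hΦ.hasFDerivAt.comp ζ (hasFDerivAt_prodMk_right c₀ ζ)).unique ?_
    simpa [Φ, hg] using hasFDerivAt_eval_jacobian g ζ
  have hli : ∀ᶠ M in 𝓝 (jacobian g ζ), LinearIndependent ℝ M.row := hind.eventually
  have hJ : jacobian (fun i => ofCoeffs S (c₀ i)) ζ = jacobian g ζ := by simp only [hg]
  have hU : ∀ᶠ q in 𝓝 (c₀, ζ), q.2 ∈ V ∧
      LinearIndependent ℝ (jacobian (fun i => ofCoeffs S (q.1 i)) q.2).row :=
    ((continuous_snd.tendsto (c₀, ζ)).eventually hV).and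
      (((continuous_jacobian_ofCoeffs S).tendsto (c₀, ζ)).eventually (hJ ▸ hli))
  have hsurj : Function.Surjective (fderiv ℝ Φ (c₀, ζ) ∘L .inr ℝ _ _) := by
    rw [hpartial]
    exact mulVec_surjective_of_linearIndependent_row hind
  filter_upwards [hΦ.eventually_exists_mem_apply_eq hsurj hU] with c ⟨x, ⟨hxV, hxind⟩, hx⟩
  refine ⟨x, hxV, fun i => ?_, hxind⟩
  simpa [Φ, hg, hζ] using congrFun hx i

end MvPolynomial

theorem statement3_general (n m : ℕ)
    (g : Fin m → MvPolynomial (Fin n) ℝ)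
    (ζ : Fin n → ℝ) (hζ : ∀ i, MvPolynomial.eval ζ (g i) = 0)
    (hind : LinearIndependent ℝ
      (fun i : Fin m => fun j : Fin n => MvPolynomial.eval ζ (MvPolynomial.pderiv j (g i))))
    (d : ℕ) (hd : ∀ i, (g i).totalDegree ≤ d)
    (ε : ℝ) (hε : 0 < ε) :
    ∃ δ > 0, ∀ f : Fin m → MvPolynomial (Fin n) ℝ,
      (∀ i, (f i).totalDegree ≤ d) →
      (∀ (i : Fin m) (s : (Fin n) →₀ ℕ), |MvPolynomial.coeff s (f i - g i)| < δ) →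
      ∃ ξ : Fin n → ℝ,
        (∀ i, MvPolynomial.eval ξ (f i) = 0) ∧
        LinearIndependent ℝ
          (fun i : Fin m => fun j : Fin n => MvPolynomial.eval ξ (MvPolynomial.pderiv j (f i))) ∧
        Real.sqrt (∑ j, (ξ j - ζ j) ^ 2) < ε := by
  set S := (Finsupp.finite_of_degree_le (σ := Fin n) d).toFinset
  have hS (p : MvPolynomial (Fin n) ℝ) (hp : p.totalDegree ≤ d) : p.support ⊆ S := fun s hs =>
    (Set.Finite.mem_toFinset _).2 ((le_totalDegree hs).trans hp)
  have hV : {x : Fin n → ℝ | Real.sqrt (∑ j, (x j - ζ j) ^ 2) < ε} ∈ 𝓝 ζ :=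
    (isOpen_lt (by fun_prop) continuous_const).mem_nhds (by simpa using hε)
  obtain ⟨δ, hδ, hsolve⟩ := Metric.eventually_nhds_iff.1 <|
    eventually_exists_zero_linearIndependent_jacobian_ofCoeffs (fun i => hS _ (hd i)) hζ hind hV
  refine ⟨δ, hδ, fun f hfd hfδ => ?_⟩
  have hclose : dist (fun i (s : S) => coeff s (f i)) (fun i (s : S) => coeff s (g i)) < δ :=
    (dist_pi_lt_iff hδ).2 fun i => (dist_pi_lt_iff hδ).2 fun s => by
      simpa [Real.dist_eq] using hfδ i s
  obtain ⟨ξ, hξε, hξ, hξind⟩ := hsolve hclose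
  simp only [ofCoeffs_coeff (hS _ (hfd _))] at hξ hξind
  exact ⟨ξ, hξ, hξind, hξε⟩

/-- numerical stability of a nondegenerate common zero of a system
of real polynomials under small perturbations of the coefficients. -/
theorem statement3 (n m : ℕ) (hm : m ≤ n)
    (g : Fin m → MvPolynomial (Fin n) ℝ)
    (ζ : Fin n → ℝ) (hζ : ∀ i, MvPolynomial.eval ζ (g i) = 0)
    (hind : LinearIndependent ℝ
      (fun i : Fin m => fun j : Fin n => MvPolynomial.eval ζ (MvPolynomial.pderiv j (g i))))
    (d : ℕ) (hd : ∀ i, (g i).totalDegree ≤ d)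
    (ε : ℝ) (hε : 0 < ε) :
    ∃ δ > 0, ∀ f : Fin m → MvPolynomial (Fin n) ℝ,
      (∀ i, (f i).totalDegree ≤ d) →
      (∀ (i : Fin m) (s : (Fin n) →₀ ℕ), |MvPolynomial.coeff s (f i - g i)| < δ) →
      ∃ ξ : Fin n → ℝ,
        (∀ i, MvPolynomial.eval ξ (f i) = 0) ∧
        LinearIndependent ℝ
          (fun i : Fin m => fun j : Fin n => MvPolynomial.eval ξ (MvPolynomial.pderiv j (f i))) ∧
        Real.sqrt (∑ j, (ξ j - ζ j) ^ 2) < ε :=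
  statement3_general n m g ζ hζ hind d hd ε hε
end

section
/- Let B ∈ X(ℝ), C′ ∈ X_B(ℝ) and D′ ∈ X_{C′}(ℝ), with lifts b, c, d ∈ ℝ^{n+2} ∖ {0} respectively. Suppose (i) T_{C′} X ≠ T_B X; (ii) the Hessian matrix H_F(C′) (evaluated at c) is invertible; and (iii) d is not a scalar multiple of (λ∇F(b) + μ∇F(c))·H_F(C′)^{-1} for any (λ, μ) ∈ ℝ² ∖ {(0,0)}. Then C′ is a smooth point of the variety Y_{B,D′}, i.e., the vectors ∇F(c), d·H_F(c) and ∇F(b) are linearly independent over ℝ. -/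
open MvPolynomial Matrix

/-!
Suppose `α ∇F(c) + β d H + γ ∇F(b) = 0` with `H = H_F(c)`. If `β ≠ 0`, then `d H` lies in the
span of the two gradients, so `d` is a multiple of `(λ ∇F(b) + μ ∇F(c)) H⁻¹`, which (iii) forbids
(with `(λ, μ) = (1, 0)` and the multiple `0`, (iii) also gives `d ≠ 0`). Hence `β = 0`, and the two
gradients are independent: they are nonzero because `X` is smooth at the real points `B` and `C′`,
and they are not proportional because `T_{C′} X ≠ T_B X`.
-/

section LinearAlgebra

variable {K : Type*} [Field K]

lemma linearIndependent_triple_of_notMem_span {V : Type*} [AddCommGroup V] [Module K V]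
    {u x w : V} (huw : LinearIndependent K ![u, w]) (hx : x ∉ Submodule.span K {u, w}) :
    LinearIndependent K ![u, x, w] := by
  have hcons : LinearIndependent K ![x, u, w] :=
    linearIndependent_finCons.mpr ⟨huw, by rwa [Matrix.range_cons, Matrix.range_cons,
      Matrix.range_empty, Set.union_empty, Set.singleton_union]⟩
  refine (linearIndependent_equiv' (Equiv.swap 0 1) ?_).mp hcons
  ext i
  fin_cases i <;> rfl

variable {m : Type*} [Fintype m]

lemma linearIndependent_pair_of_setOf_dotProduct_ne {u w : m → K} (hu : u ≠ 0) (hw : w ≠ 0)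
    (hker : {x | u ⬝ᵥ x = 0} ≠ {x | w ⬝ᵥ x = 0}) : LinearIndependent K ![u, w] := by
  refine (LinearIndependent.pair_iff' hu).mpr fun a hau => hker ?_
  have ha : a ≠ 0 := by rintro rfl; exact hw (by rw [← hau, zero_smul])
  ext x
  simp [← hau, smul_dotProduct, ha]

lemma vecMul_notMem_span_pair [DecidableEq m] {M : Matrix m m K} (hM : IsUnit M)
    {u w d : m → K}
    (hd : ∀ lam mu t : K, (lam, mu) ≠ (0, 0) → d ≠ t • vecMul (lam • w + mu • u) M⁻¹) :
    vecMul d M ∉ Submodule.span K {u, w} := by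
  intro hdM
  obtain ⟨α, β, hαβ⟩ := Submodule.mem_span_pair.mp hdM
  have hd_eq : d = vecMul (β • w + α • u) M⁻¹ := by
    rw [add_comm, hαβ, vecMul_vecMul,
      mul_nonsing_inv _ ((isUnit_iff_isUnit_det M).mp hM), vecMul_one]
  by_cases h0 : (β, α) = (0, 0)
  · obtain ⟨rfl, rfl⟩ := Prod.mk_inj.mp h0
    exact hd 1 0 0 (by simp) (by simpa using hd_eq)
  · exact hd β α 1 h0 (by rw [one_smul, hd_eq])

end LinearAlgebra

lemma grad_algebraMap_comp {A B : Type} [CommRing A] [CommRing B] [Algebra ℚ A] [Algebra ℚ B]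
    [Algebra A B] [IsScalarTower ℚ A B] {m : ℕ} (F : MvPolynomial (Fin m) ℚ) (v : Fin m → A) :
    grad F (algebraMap A B ∘ v) = algebraMap A B ∘ grad F v :=
  funext fun i => aeval_algebraMap_apply B v (pderiv i F)

lemma grad_ne_zero_of_real {m : ℕ} {F : MvPolynomial (Fin m) ℚ}
    (hsing : ∀ v : Fin m → ℂ, v ≠ 0 → aeval v F = 0 → grad F v ≠ 0)
    {v : Fin m → ℝ} (hv : v ≠ 0) (hXv : aeval v F = 0) : grad F v ≠ 0 := by
  have hinj : Function.Injective (algebraMap ℝ ℂ) := (algebraMap ℝ ℂ).injective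
  intro hgrad
  refine hsing (algebraMap ℝ ℂ ∘ v) ?_ ?_ ?_
  · exact fun h => hv (hinj.comp_left (h.trans (by ext; simp)))
  · rw [aeval_algebraMap_apply, hXv, map_zero]
  · rw [grad_algebraMap_comp, hgrad]
    ext
    simp

theorem statement15_general (n : ℕ)
    (F : MvPolynomial (Fin (n + 2)) ℚ) (hF : SmoothCubic F)
    (b c d : Fin (n + 2) → ℝ) (hb : b ≠ 0) (hc : c ≠ 0)
    (hXb : MvPolynomial.aeval b F = 0) (hXc : MvPolynomial.aeval c F = 0)
    (hi : {x : Fin (n + 2) → ℝ | grad F c ⬝ᵥ x = 0} ≠ {x | grad F b ⬝ᵥ x = 0})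
    (hii : IsUnit (hessAt F c))
    (hiii : ∀ lam mu t : ℝ, (lam, mu) ≠ (0, 0) →
      d ≠ t • Matrix.vecMul (lam • grad F b + mu • grad F c) (hessAt F c)⁻¹) :
    LinearIndependent ℝ ![grad F c, Matrix.vecMul d (hessAt F c), grad F b] := by
  obtain ⟨-, -, hsing⟩ := hF
  have hgrads : LinearIndependent ℝ ![grad F c, grad F b] :=
    linearIndependent_pair_of_setOf_dotProduct_ne (grad_ne_zero_of_real hsing hc hXc)
      (grad_ne_zero_of_real hsing hb hXb) hi
  exact linearIndependent_triple_of_notMem_span hgrads (vecMul_notMem_span_pair hii hiii)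

/-- smoothness criterion for the point `C′` on `Y_{B,D′}`. -/
theorem statement15 (n : ℕ) (hn : 1 ≤ n)
    (F : MvPolynomial (Fin (n + 2)) ℚ) (hF : SmoothCubic F)
    (b c d : Fin (n + 2) → ℝ) (hb : b ≠ 0) (hc : c ≠ 0) (hd : d ≠ 0)
    (hXb : MvPolynomial.aeval b F = 0) (hXc : MvPolynomial.aeval c F = 0)
    (hXd : MvPolynomial.aeval d F = 0)
    (hcB : grad F b ⬝ᵥ c = 0)  -- `C′ ∈ X_B`
    (hdC : grad F c ⬝ᵥ d = 0)  -- `D′ ∈ X_{C′}`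
    (hi : {x : Fin (n + 2) → ℝ | grad F c ⬝ᵥ x = 0} ≠ {x | grad F b ⬝ᵥ x = 0})
    (hii : IsUnit (hessAt F c))
    (hiii : ∀ lam mu t : ℝ, (lam, mu) ≠ (0, 0) →
      d ≠ t • Matrix.vecMul (lam • grad F b + mu • grad F c) (hessAt F c)⁻¹) :
    LinearIndependent ℝ ![grad F c, Matrix.vecMul d (hessAt F c), grad F b] :=
  statement15_general n F hF b c d hb hc hXb hXc hi hii hiii
end
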